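/- arXiv:2006.12549 — 7 statements merged into one kernel-verified Lean document; each statement's English description precedes it below -/
import Mathlib

section
/- Let α be a type, X ⊆ α a set, ι a finite index set, n : ι → α → ℂ and d : ι → α → ℝ functions such that d i x > 0 for every i ∈ ι and every x ∈ X. Define F(x) = ∑_{i ∈ ι} |n i x|² / (d i x) and F_q(x, y) = ∑_{i ∈ ι} (2·Re(conj(y i)·(n i x)) − |y i|²·(d i x)) for y : ι → ℂ. Then: (i) for every x ∈ X and every y : ι → ℂ, F_q(x, y) ≤ F(x); and (ii) for every x ∈ X, F_q(x, ŷ) = F(x) where ŷ i = (n i x)/(d i x). -/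
open scoped BigOperators InnerProductSpace

/-! Each summand is handled separately, and `ℂ` is viewed as a real inner product space, where
`Re(conj y · a) = ⟪y, a⟫`. Completing the square gives, for `t > 0`,
`‖a‖²/t - (2⟪y, a⟫ - ‖y‖² t) = ‖a - t y‖²/t ≥ 0`, with equality exactly at `y = a/t`. -/

section CompletingTheSquare

variable {E : Type*} [NormedAddCommGroup E] [InnerProductSpace ℝ E]

theorem norm_sq_div_sub_eq_norm_sub_smul_sq_div (a y : E) {t : ℝ} (ht : t ≠ 0) :
    ‖a‖ ^ 2 / t - (2 * ⟪y, a⟫_ℝ - ‖y‖ ^ 2 * t) = ‖a - t • y‖ ^ 2 / t := by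
  rw [norm_sub_sq_real, norm_smul, inner_smul_right, real_inner_comm, Real.norm_eq_abs,
    mul_pow, sq_abs]
  field_simp
  ring

theorem two_inner_sub_norm_sq_mul_le_norm_sq_div (a y : E) {t : ℝ} (ht : 0 < t) :
    2 * ⟪y, a⟫_ℝ - ‖y‖ ^ 2 * t ≤ ‖a‖ ^ 2 / t := by
  have hgap := norm_sq_div_sub_eq_norm_sub_smul_sq_div a y ht.ne'
  have : 0 ≤ ‖a - t • y‖ ^ 2 / t := by positivity
  linarith

theorem two_inner_sub_norm_sq_mul_eq_norm_sq_div {a y : E} {t : ℝ} (ht : t ≠ 0) (hy : t • y = a) :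
    2 * ⟪y, a⟫_ℝ - ‖y‖ ^ 2 * t = ‖a‖ ^ 2 / t := by
  have hgap := norm_sq_div_sub_eq_norm_sub_smul_sq_div a y ht
  rw [hy, sub_self, norm_zero, zero_pow two_ne_zero, zero_div] at hgap
  linarith

end CompletingTheSquare

theorem Complex.re_conj_mul_eq_inner (y a : ℂ) : ((starRingEnd ℂ) y * a).re = ⟪y, a⟫_ℝ := by
  rw [Complex.inner, mul_comm]

/-- Quadratic transform (Theorem 1): with `F(x) = ∑ᵢ |nᵢ(x)|²/dᵢ(x)` and
`F_q(x,y) = ∑ᵢ (2·Re(conj(yᵢ)·nᵢ(x)) − |yᵢ|²·dᵢ(x))`, one has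
(i) `F_q(x,y) ≤ F(x)` for all `x ∈ X` and all `y`, and
(ii) `F_q(x,ŷ) = F(x)` for `ŷ i = nᵢ(x)/dᵢ(x)`. -/
theorem quadratic_transform_bound {α : Type*} {ι : Type*} [Fintype ι]
    (X : Set α) (n : ι → α → ℂ) (d : ι → α → ℝ)
    (hd : ∀ i, ∀ x ∈ X, 0 < d i x) :
    (∀ x ∈ X, ∀ y : ι → ℂ,
        (∑ i, (2 * ((starRingEnd ℂ) (y i) * n i x).re - ‖y i‖ ^ 2 * d i x)) ≤
          ∑ i, ‖n i x‖ ^ 2 / d i x) ∧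
      (∀ x ∈ X,
        (∑ i, (2 * ((starRingEnd ℂ) (n i x / (d i x : ℂ)) * n i x).re -
            ‖n i x / (d i x : ℂ)‖ ^ 2 * d i x)) =
          ∑ i, ‖n i x‖ ^ 2 / d i x) := by
  simp only [Complex.re_conj_mul_eq_inner]
  refine ⟨fun x hx y => Finset.sum_le_sum fun i _ =>
    two_inner_sub_norm_sq_mul_le_norm_sq_div (n i x) (y i) (hd i x hx), fun x hx => ?_⟩
  refine Finset.sum_congr rfl fun i _ => two_inner_sub_norm_sq_mul_eq_norm_sq_div (hd i x hx).ne' ?_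
  rw [Complex.real_smul, mul_div_cancel₀ _ (Complex.ofReal_ne_zero.mpr (hd i x hx).ne')]
end

section
/- Let α be a type, X ⊆ α a set, ι a finite index set, n : ι → α → ℂ and d : ι → α → ℝ functions such that d i x > 0 for every i ∈ ι and every x ∈ X. Define F(x) = ∑_{i ∈ ι} |n i x|² / (d i x) and F_q(x, y) = ∑_{i ∈ ι} (2·Re(conj(y i)·(n i x)) − |y i|²·(d i x)) for y : ι → ℂ. Then a point x* ∈ X satisfies F(x*) ≥ F(x) for all x ∈ X if and only if the pair (x*, y*) with y* i = (n i x*)/(d i x*) satisfies F_q(x*, y*) ≥ F_q(x, y) for all x ∈ X and all y : ι → ℂ; moreover in that case F(x*) = F_q(x*, y*). -/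
/-!
Completing the square, `‖n‖²/d - (2 Re(ȳ n) - ‖y‖² d) = ‖n - y d‖²/d`, shows that for `d > 0`
each summand of `F_q` is at most `‖n‖²/d`, with equality at `y = n/d`. Hence `F` is the
maximum of `F_q` over `y`, attained at `y*`, and maximizing `F` over `X` is the same as
maximizing `F_q` jointly over `X × ℂ^ι`.
-/

open scoped ComplexConjugate

namespace Complex

lemma sq_norm_div_sub_two_re_conj_mul_add_eq (n y : ℂ) {d : ℝ} (hd : d ≠ 0) :
    ‖n‖ ^ 2 / d - (2 * (conj y * n).re - ‖y‖ ^ 2 * d) = ‖n - y * d‖ ^ 2 / d := by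
  simp only [Complex.sq_norm, normSq_apply, sub_re, sub_im, mul_re, mul_im, conj_re, conj_im,
    ofReal_re, ofReal_im]
  field_simp
  ring

lemma two_re_conj_mul_sub_sq_norm_mul_le (n y : ℂ) {d : ℝ} (hd : 0 < d) :
    2 * (conj y * n).re - ‖y‖ ^ 2 * d ≤ ‖n‖ ^ 2 / d := by
  have hgap := sq_norm_div_sub_two_re_conj_mul_add_eq n y hd.ne'
  have : 0 ≤ ‖n - y * d‖ ^ 2 / d := by positivity
  linarith

lemma two_re_conj_div_mul_sub_sq_norm_mul_eq (n : ℂ) {d : ℝ} (hd : d ≠ 0) :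
    2 * (conj (n / d) * n).re - ‖n / d‖ ^ 2 * d = ‖n‖ ^ 2 / d := by
  have hgap := sq_norm_div_sub_two_re_conj_mul_add_eq n (n / d) hd
  rw [div_mul_cancel₀ n (ofReal_ne_zero.mpr hd), sub_self, norm_zero, zero_pow two_ne_zero,
    zero_div, sub_eq_zero] at hgap
  exact hgap.symm

end Complex

theorem forall_le_iff_forall_le_of_le_of_eq {α β γ : Type*} [Preorder γ] {X : Set α}
    {F : α → γ} {G : α → β → γ} {y : α → β}
    (hle : ∀ x ∈ X, ∀ b, G x b ≤ F x) (heq : ∀ x ∈ X, G x (y x) = F x)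
    {x₀ : α} (hx₀ : x₀ ∈ X) :
    (∀ x ∈ X, F x ≤ F x₀) ↔ ∀ x ∈ X, ∀ b, G x b ≤ G x₀ (y x₀) := by
  rw [heq x₀ hx₀]
  refine ⟨fun hmax x hx b => (hle x hx b).trans (hmax x hx), fun hmax x hx => ?_⟩
  rw [← heq x hx]
  exact hmax x hx (y x)

/-- Quadratic transform (Theorem 1), equivalence of optimizers: `x* ∈ X` maximizes
`F(x) = ∑ᵢ |nᵢ(x)|²/dᵢ(x)` over `X` iff the pair `(x*, y*)` with `y* i = nᵢ(x*)/dᵢ(x*)`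
maximizes `F_q(x,y) = ∑ᵢ (2·Re(conj(yᵢ)·nᵢ(x)) − |yᵢ|²·dᵢ(x))` over `X × ℂ^ι`;
moreover in that case `F(x*) = F_q(x*, y*)`. -/
theorem quadratic_transform_equivalence {α : Type*} {ι : Type*} [Fintype ι]
    (X : Set α) (n : ι → α → ℂ) (d : ι → α → ℝ)
    (hd : ∀ i, ∀ x ∈ X, 0 < d i x)
    (F : α → ℝ) (hF : ∀ x, F x = ∑ i, ‖n i x‖ ^ 2 / d i x)
    (Fq : α → (ι → ℂ) → ℝ)
    (hFq : ∀ x, ∀ y : ι → ℂ,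
      Fq x y = ∑ i, (2 * ((starRingEnd ℂ) (y i) * n i x).re -
        ‖y i‖ ^ 2 * d i x))
    (xstar : α) (hxstar : xstar ∈ X) :
    ((∀ x ∈ X, F x ≤ F xstar) ↔
        (∀ x ∈ X, ∀ y : ι → ℂ,
          Fq x y ≤ Fq xstar (fun i => n i xstar / (d i xstar : ℂ)))) ∧
      ((∀ x ∈ X, F x ≤ F xstar) →
        F xstar = Fq xstar (fun i => n i xstar / (d i xstar : ℂ))) := by
  have hle : ∀ x ∈ X, ∀ y : ι → ℂ, Fq x y ≤ F x := fun x hx y => by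
    rw [hFq, hF]
    exact Finset.sum_le_sum fun i _ =>
      Complex.two_re_conj_mul_sub_sq_norm_mul_le _ _ (hd i x hx)
  have heq : ∀ x ∈ X, Fq x (fun i => n i x / (d i x : ℂ)) = F x := fun x hx => by
    rw [hFq, hF]
    exact Finset.sum_congr rfl fun i _ =>
      Complex.two_re_conj_div_mul_sub_sq_norm_mul_eq _ (hd i x hx).ne'
  exact ⟨forall_le_iff_forall_le_of_le_of_eq hle heq hxstar,
    fun _ => (heq xstar hxstar).symm⟩
end

section
/- Let w, S, I be real numbers with w > 0, S ≥ 0 and I > 0, and define g(γ) = w·log(1+γ) − w·γ + w·(1+γ)·S/(S+I) for γ ∈ (−1, ∞). Then for every γ > −1 one has g(γ) ≤ g(S/I) = w·log(1 + S/I), with equality if and only if γ = S/I. -/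
/-!
Writing `s = S / I`, one has `S / (S + I) = s / (1 + s)`, and with `a = (1 + γ) / (1 + s)` the
objective becomes `g γ = w * (log (1 + s) + (log a - (a - 1)))`. Since `log a ≤ a - 1` with
equality exactly at `a = 1`, i.e. at `γ = s`, the claim follows from `w > 0`.
-/

open Real

theorem Real.log_eq_sub_one_iff {x : ℝ} (hx : 0 < x) : log x = x - 1 ↔ x = 1 := by
  refine ⟨fun h => ?_, fun h => by simp [h]⟩
  by_contra hne
  exact (log_lt_sub_one_of_pos hx hne).ne h

/-- The Lagrangian dual objective of one user with unit weight, as a function of the auxiliary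
variable `γ`, when the SINR equals `s`. -/
noncomputable def sinrDualObjective (s γ : ℝ) : ℝ :=
  log (1 + γ) - γ + (1 + γ) * s / (1 + s)

lemma sinrDualObjective_eq {s γ : ℝ} (hs : -1 < s) (hγ : -1 < γ) :
    sinrDualObjective s γ =
      log (1 + s) + (log ((1 + γ) / (1 + s)) - ((1 + γ) / (1 + s) - 1)) := by
  have hs' : 1 + s ≠ 0 := by linarith
  rw [sinrDualObjective, log_div (by linarith) hs']
  field_simp
  ring

lemma sinrDualObjective_self {s : ℝ} (hs : 1 + s ≠ 0) :
    sinrDualObjective s s = log (1 + s) := by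
  rw [sinrDualObjective]
  field_simp
  ring

lemma sinrDualObjective_le {s γ : ℝ} (hs : -1 < s) (hγ : -1 < γ) :
    sinrDualObjective s γ ≤ log (1 + s) := by
  have := log_le_sub_one_of_pos (div_pos (by linarith : 0 < 1 + γ) (by linarith : 0 < 1 + s))
  rw [sinrDualObjective_eq hs hγ]
  linarith

lemma sinrDualObjective_eq_iff {s γ : ℝ} (hs : -1 < s) (hγ : -1 < γ) :
    sinrDualObjective s γ = log (1 + s) ↔ γ = s := by
  have hs' : 1 + s ≠ 0 := by linarith
  rw [sinrDualObjective_eq hs hγ, add_eq_left, sub_eq_zero,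
    log_eq_sub_one_iff (div_pos (by linarith) (by linarith)), div_eq_one_iff_eq hs']
  exact add_right_inj 1

/-- Per-user optimization of the auxiliary SINR variable: with `w > 0`, `S ≥ 0`, `I > 0`,
and `g(γ) = w·log(1+γ) − w·γ + w·(1+γ)·S/(S+I)` on `(−1,∞)`, every `γ > −1` satisfies
`g(γ) ≤ g(S/I) = w·log(1+S/I)`, with equality iff `γ = S/I`. -/
theorem sinr_auxiliary_opt (w S I : ℝ) (hw : 0 < w) (hS : 0 ≤ S) (hI : 0 < I)
    (g : ℝ → ℝ)
    (hg : ∀ γ : ℝ, g γ = w * Real.log (1 + γ) - w * γ + w * (1 + γ) * S / (S + I)) :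
    ∀ γ : ℝ, -1 < γ →
      (g γ ≤ g (S / I) ∧ g (S / I) = w * Real.log (1 + S / I) ∧
        (g γ = g (S / I) ↔ γ = S / I)) := by
  intro γ hγ
  have hs : -1 < S / I := by linarith [div_nonneg hS hI.le]
  have hg_eq : ∀ γ, g γ = w * sinrDualObjective (S / I) γ := fun γ => by
    rw [hg, sinrDualObjective]
    field_simp
    ring
  have hg_max : g (S / I) = w * log (1 + S / I) := by
    rw [hg_eq, sinrDualObjective_self (by linarith)]
  refine ⟨?_, hg_max, ?_⟩
  · rw [hg_eq, hg_max]
    exact mul_le_mul_of_nonneg_left (sinrDualObjective_le hs hγ) hw.le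
  · rw [hg_eq, hg_max, mul_right_inj' hw.ne']
    exact sinrDualObjective_eq_iff hs hγ
end

section
/- Let ι be a finite index set and let w, S, I : ι → ℝ satisfy w i > 0, S i ≥ 0 and I i > 0 for every i. Define f_r(γ) = ∑_{i ∈ ι} (w i·log(1+γ i) − (w i)·(γ i) + (w i)·(1+γ i)·(S i)/(S i + I i)) for γ : ι → ℝ with γ i > −1 for all i. Then f_r attains its maximum over {γ : ∀ i, γ i > −1} uniquely at γ̂ given by γ̂ i = S i / I i, and the maximum value equals ∑_{i ∈ ι} w i·log(1 + (S i)/(I i)). -/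
open scoped BigOperators

lemma dual_aux (w S I γ : ℝ) (hw : 0 < w) (hS : 0 ≤ S) (hI : 0 < I) (hγ : -1 < γ) :
    w * Real.log (1 + γ) - w * γ + w * (1 + γ) * S / (S + I)
      ≤ w * Real.log (1 + S / I) ∧
    (w * Real.log (1 + γ) - w * γ + w * (1 + γ) * S / (S + I)
      = w * Real.log (1 + S / I) → γ = S / I) := by
  have hSI : 0 < S + I := by linarith
  have hγ' : 0 < 1 + γ := by linarith
  have hg : 0 < 1 + S / I := by positivity
  set x : ℝ := (1 + γ) / (1 + S / I) with hx
  have hx0 : 0 < x := div_pos hγ' hg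
  have hlogx : Real.log x = Real.log (1 + γ) - Real.log (1 + S / I) :=
    Real.log_div (ne_of_gt hγ') (ne_of_gt hg)
  have hx1 : x - 1 = (γ - S / I) * I / (S + I) := by
    rw [hx]
    field_simp
    ring
  have hid : (w * Real.log (1 + γ) - w * γ + w * (1 + γ) * S / (S + I))
      - w * Real.log (1 + S / I)
      = w * (Real.log (1 + γ) - Real.log (1 + S / I))
        - w * ((γ - S / I) * I / (S + I)) := by
    have hI' : (I : ℝ) ≠ 0 := ne_of_gt hI
    have hSI' : (S + I : ℝ) ≠ 0 := ne_of_gt hSI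
    field_simp
    ring
  constructor
  · have h := Real.log_le_sub_one_of_pos hx0
    rw [hlogx, hx1] at h
    nlinarith [mul_le_mul_of_nonneg_left h (le_of_lt hw)]
  · intro heq
    by_contra hne
    have hxne : x ≠ 1 := by
      intro h1
      rw [hx, div_eq_one_iff_eq (ne_of_gt hg)] at h1
      exact hne (by linarith)
    have hlt := Real.log_lt_sub_one_of_pos hx0 hxne
    rw [hlogx, hx1] at hlt
    nlinarith [mul_lt_mul_of_pos_left hlt hw]

/-- Maximizing the Lagrangian dual transform `f_r` over the auxiliary SINR variables:
with `wᵢ > 0`, `Sᵢ ≥ 0`, `Iᵢ > 0`, the function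
`f_r(γ) = ∑ᵢ (wᵢ·log(1+γᵢ) − wᵢ·γᵢ + wᵢ·(1+γᵢ)·Sᵢ/(Sᵢ+Iᵢ))` attains its maximum over
`{γ : ∀ i, γᵢ > −1}` uniquely at `γ̂ i = Sᵢ/Iᵢ`, and the maximum equals
`∑ᵢ wᵢ·log(1 + Sᵢ/Iᵢ)`. -/
theorem dual_transform_max {ι : Type*} [Fintype ι]
    (w S I : ι → ℝ) (hw : ∀ i, 0 < w i) (hS : ∀ i, 0 ≤ S i) (hI : ∀ i, 0 < I i)
    (fr : (ι → ℝ) → ℝ)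
    (hfr : ∀ γ : ι → ℝ,
      fr γ = ∑ i, (w i * Real.log (1 + γ i) - w i * γ i +
        w i * (1 + γ i) * S i / (S i + I i))) :
    (∀ γ : ι → ℝ, (∀ i, -1 < γ i) → fr γ ≤ fr (fun i => S i / I i)) ∧
      fr (fun i => S i / I i) = ∑ i, w i * Real.log (1 + S i / I i) ∧
      (∀ γ : ι → ℝ, (∀ i, -1 < γ i) →
        (∀ γ' : ι → ℝ, (∀ i, -1 < γ' i) → fr γ' ≤ fr γ) → γ = fun i => S i / I i) := by
  have hval : fr (fun i => S i / I i) = ∑ i, w i * Real.log (1 + S i / I i) := by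
    rw [hfr]
    refine Finset.sum_congr rfl fun i _ => ?_
    have hIi := hI i
    have hSIi : S i + I i ≠ 0 := ne_of_gt (by linarith [hS i, hI i])
    field_simp
    ring
  have hterm : ∀ (γ : ι → ℝ), (∀ i, -1 < γ i) → ∀ i : ι,
      w i * Real.log (1 + γ i) - w i * γ i + w i * (1 + γ i) * S i / (S i + I i)
        ≤ w i * Real.log (1 + S i / I i) :=
    fun γ hγ i => (dual_aux (w i) (S i) (I i) (γ i) (hw i) (hS i) (hI i) (hγ i)).1
  have hmax : ∀ γ : ι → ℝ, (∀ i, -1 < γ i) → fr γ ≤ fr (fun i => S i / I i) := by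
    intro γ hγ
    rw [hfr γ, hval]
    exact Finset.sum_le_sum fun i _ => hterm γ hγ i
  refine ⟨hmax, hval, ?_⟩
  intro γ hγ hmaxγ
  have h1 : fr γ ≤ fr (fun i => S i / I i) := hmax γ hγ
  have h2 : fr (fun i => S i / I i) ≤ fr γ :=
    hmaxγ _ (fun i => by
      have h0 : 0 ≤ S i / I i := div_nonneg (hS i) (le_of_lt (hI i))
      linarith)
  have heq : fr γ = fr (fun i => S i / I i) := le_antisymm h1 h2
  rw [hfr γ, hval] at heq
  have heach : ∀ i ∈ Finset.univ,
      w i * Real.log (1 + γ i) - w i * γ i + w i * (1 + γ i) * S i / (S i + I i)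
        = w i * Real.log (1 + S i / I i) := by
    intro i _
    by_contra hne
    have hlt : w i * Real.log (1 + γ i) - w i * γ i + w i * (1 + γ i) * S i / (S i + I i)
        < w i * Real.log (1 + S i / I i) := lt_of_le_of_ne (hterm γ hγ i) hne
    have hstrict : (∑ j, (w j * Real.log (1 + γ j) - w j * γ j +
        w j * (1 + γ j) * S j / (S j + I j))) < ∑ j, w j * Real.log (1 + S j / I j) :=
      Finset.sum_lt_sum (fun j _ => hterm γ hγ j) ⟨i, Finset.mem_univ i, hlt⟩
    exact absurd heq (ne_of_lt hstrict)
  funext i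
  exact (dual_aux (w i) (S i) (I i) (γ i) (hw i) (hS i) (hI i) (hγ i)).2
    (heach i (Finset.mem_univ i))
end

section
/- Let A be an M×M complex Hermitian positive semidefinite matrix, b ∈ ℂ^M, and let 0 < μ₁ ≤ μ₂ be real numbers. Then ‖(A + μ₂·I)⁻¹ b‖ ≤ ‖(A + μ₁·I)⁻¹ b‖, where ‖·‖ is the Euclidean norm on ℂ^M. -/
/-!
Write `x μ = (A + μ I)⁻¹ b`. The resolvent identity gives
`x μ₁ = x μ₂ + (μ₂ - μ₁) (A + μ₁ I)⁻¹ x μ₂`, and since `(A + μ₁ I)⁻¹` is positive semidefinite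
the correction term has nonnegative real inner product with `x μ₂`; adding such a vector cannot
decrease the norm.
-/

open Matrix
open scoped ComplexOrder InnerProductSpace

theorem norm_le_norm_add_of_re_inner_nonneg {𝕜 E : Type*} [RCLike 𝕜] [SeminormedAddCommGroup E]
    [InnerProductSpace 𝕜 E] {x y : E} (h : 0 ≤ RCLike.re ⟪x, y⟫_𝕜) : ‖x‖ ≤ ‖x + y‖ := by
  have hsq : ‖x‖ ^ 2 ≤ ‖x + y‖ ^ 2 := by
    rw [@norm_add_sq 𝕜]
    nlinarith [sq_nonneg ‖y‖]
  exact (pow_le_pow_iff_left₀ (norm_nonneg _) (norm_nonneg _) two_ne_zero).mp hsq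

namespace Matrix

variable {n : Type*} [DecidableEq n]

theorem PosSemidef.norm_toLp_le_norm_toLp_add_mulVec [Fintype n] {𝕜 : Type*} [RCLike 𝕜]
    {P : Matrix n n 𝕜} (hP : P.PosSemidef) (x : n → 𝕜) :
    ‖WithLp.toLp 2 x‖ ≤ ‖WithLp.toLp 2 (x + P *ᵥ x)‖ := by
  have hx := (isPositive_toEuclideanLin_iff.mpr hP).re_inner_nonneg_right (WithLp.toLp 2 x)
  rw [toLpLin_toLp, toLin'_apply] at hx
  simpa only [WithLp.toLp_add] using norm_le_norm_add_of_re_inner_nonneg hx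

theorem PosSemidef.posDef_add_smul_one {𝕜 : Type*} [RCLike 𝕜] {A : Matrix n n 𝕜}
    (hA : A.PosSemidef) {μ : 𝕜} (hμ : 0 < μ) : (A + μ • 1).PosDef :=
  PosDef.posSemidef_add hA (PosDef.one.smul hμ)

theorem inv_add_smul_one_sub_inv_add_smul_one [Fintype n] {α : Type*} [CommRing α]
    (A : Matrix n n α) {s t : α} (h : IsUnit (A + s • 1) ↔ IsUnit (A + t • 1)) :
    (A + s • 1)⁻¹ - (A + t • 1)⁻¹ = (t - s) • ((A + s • 1)⁻¹ * (A + t • 1)⁻¹) := by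
  rw [inv_sub_inv h, add_sub_add_left_eq_sub, ← sub_smul, Matrix.mul_smul, Matrix.mul_one,
    Matrix.smul_mul]

end Matrix

theorem beamformer_norm_antitone_general {M : ℕ} (A : Matrix (Fin M) (Fin M) ℂ)
    (hApsd : A.PosSemidef) (b : Fin M → ℂ)
    (μ₁ μ₂ : ℝ) (hμ₁ : 0 < μ₁) (hμ : μ₁ ≤ μ₂) :
    ‖((WithLp.equiv 2 (Fin M → ℂ)).symm
        ((A + (μ₂ : ℂ) • (1 : Matrix (Fin M) (Fin M) ℂ))⁻¹ *ᵥ b) :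
      EuclideanSpace ℂ (Fin M))‖ ≤
    ‖((WithLp.equiv 2 (Fin M → ℂ)).symm
        ((A + (μ₁ : ℂ) • (1 : Matrix (Fin M) (Fin M) ℂ))⁻¹ *ᵥ b) :
      EuclideanSpace ℂ (Fin M))‖ := by
  have h₁ : (A + (μ₁ : ℂ) • 1).PosDef := hApsd.posDef_add_smul_one (by exact_mod_cast hμ₁)
  have h₂ : (A + (μ₂ : ℂ) • 1).PosDef :=
    hApsd.posDef_add_smul_one (by exact_mod_cast hμ₁.trans_le hμ)
  have hres := inv_add_smul_one_sub_inv_add_smul_one A (iff_of_true h₁.isUnit h₂.isUnit)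
  have hP : (((μ₂ : ℂ) - μ₁) • (A + (μ₁ : ℂ) • 1)⁻¹).PosSemidef :=
    h₁.posSemidef.inv.smul (by exact_mod_cast sub_nonneg.mpr hμ)
  have hx : (A + (μ₁ : ℂ) • 1)⁻¹ *ᵥ b = (A + (μ₂ : ℂ) • 1)⁻¹ *ᵥ b +
      (((μ₂ : ℂ) - μ₁) • (A + (μ₁ : ℂ) • 1)⁻¹) *ᵥ ((A + (μ₂ : ℂ) • 1)⁻¹ *ᵥ b) := by
    rw [mulVec_mulVec, smul_mul_assoc, ← hres, sub_mulVec, add_sub_cancel]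
  rw [hx]
  exact hP.norm_toLp_le_norm_toLp_add_mulVec _

/-- Monotonicity of the beamformer norm in the dual variable: for Hermitian PSD `A`,
`0 < μ₁ ≤ μ₂` implies `‖(A + μ₂I)⁻¹ b‖ ≤ ‖(A + μ₁I)⁻¹ b‖` in the Euclidean norm. -/
theorem beamformer_norm_antitone {M : ℕ} (A : Matrix (Fin M) (Fin M) ℂ)
    (hA : A.IsHermitian) (hApsd : A.PosSemidef) (b : Fin M → ℂ)
    (μ₁ μ₂ : ℝ) (hμ₁ : 0 < μ₁) (hμ : μ₁ ≤ μ₂) :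
    ‖((WithLp.equiv 2 (Fin M → ℂ)).symm
        ((A + (μ₂ : ℂ) • (1 : Matrix (Fin M) (Fin M) ℂ))⁻¹ *ᵥ b) :
      EuclideanSpace ℂ (Fin M))‖ ≤
    ‖((WithLp.equiv 2 (Fin M → ℂ)).symm
        ((A + (μ₁ : ℂ) • (1 : Matrix (Fin M) (Fin M) ℂ))⁻¹ *ᵥ b) :
      EuclideanSpace ℂ (Fin M))‖ :=
  beamformer_norm_antitone_general A hApsd b μ₁ μ₂ hμ₁ hμ
end

section
/- Let A be an M×M complex Hermitian positive semidefinite matrix, b ∈ ℂ^M, and P > 0 a real number. If there exists μ₀ > 0 with ‖(A + μ₀·I)⁻¹ b‖² > P, then there exists μ ≥ μ₀ with ‖(A + μ·I)⁻¹ b‖² = P, where ‖·‖ is the Euclidean norm on ℂ^M. -/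
open Matrix Filter Topology Set
open scoped ComplexOrder

/-! For positive semidefinite `A` and `μ > 0`, `Re ⟪v, (A + μI) v⟫ ≥ μ ‖v‖²`, so Cauchy–Schwarz
gives `‖(A + μI)⁻¹ b‖ ≤ ‖b‖ / μ`. Hence the power `‖(A + μI)⁻¹ b‖²` is continuous on `μ > 0` and
tends to `0` as `μ → ∞`; the intermediate value theorem on `[μ₀, μ₁]`, for `μ₁` large enough that
the power is below `P`, produces the required `μ`. -/

namespace Matrix.PosSemidef

variable {𝕜 n : Type*} [RCLike 𝕜] [DecidableEq n] {A : Matrix n n 𝕜}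

lemma posDef_add_smul_one_s16 (hA : A.PosSemidef) {μ : ℝ} (hμ : 0 < μ) :
    (A + (μ : 𝕜) • 1).PosDef :=
  PosDef.posSemidef_add hA (PosDef.one.smul (RCLike.ofReal_pos.mpr hμ))

lemma mul_norm_le_norm_add_smul_one_mulVec [Fintype n] (hA : A.PosSemidef) (μ : ℝ)
    (v : n → 𝕜) :
    μ * ‖WithLp.toLp 2 v‖ ≤ ‖WithLp.toLp 2 ((A + (μ : 𝕜) • 1) *ᵥ v)‖ := by
  set x := WithLp.toLp 2 v
  set y := WithLp.toLp 2 ((A + (μ : 𝕜) • 1) *ᵥ v)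
  have hquad : μ * ‖x‖ ^ 2 ≤ RCLike.re (inner 𝕜 x y) := by
    have hAv : 0 ≤ RCLike.re (star v ⬝ᵥ (A *ᵥ v)) :=
      RCLike.nonneg_iff.mp (hA.dotProduct_mulVec_nonneg v) |>.1
    have hinner : inner 𝕜 x y = star v ⬝ᵥ (A *ᵥ v) + (μ : 𝕜) * inner 𝕜 x x := by
      simp only [x, y, EuclideanSpace.inner_toLp_toLp, add_mulVec, smul_mulVec, one_mulVec,
        dotProduct_comm _ (star v), dotProduct_add, dotProduct_smul, smul_eq_mul]
    rw [hinner, map_add, RCLike.re_ofReal_mul, inner_self_eq_norm_sq]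
    linarith
  have hcs : μ * ‖x‖ ^ 2 ≤ ‖x‖ * ‖y‖ := hquad.trans (re_inner_le_norm x y)
  rcases (norm_nonneg x).eq_or_lt with hx | hx
  · rw [← hx, mul_zero]
    exact norm_nonneg y
  · nlinarith

lemma norm_inv_add_smul_one_mulVec_le [Fintype n] (hA : A.PosSemidef) {μ : ℝ} (hμ : 0 < μ)
    (b : n → 𝕜) :
    ‖WithLp.toLp 2 ((A + (μ : 𝕜) • 1)⁻¹ *ᵥ b)‖ ≤ ‖WithLp.toLp 2 b‖ / μ := by
  have hunit : IsUnit (A + (μ : 𝕜) • 1).det :=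
    (isUnit_iff_isUnit_det _).mp (hA.posDef_add_smul_one_s16 hμ).isUnit
  have h := hA.mul_norm_le_norm_add_smul_one_mulVec μ ((A + (μ : 𝕜) • 1)⁻¹ *ᵥ b)
  rwa [mulVec_mulVec, mul_nonsing_inv _ hunit, one_mulVec, ← le_div_iff₀' hμ] at h

lemma continuousOn_inv_add_smul_one [Fintype n] (hA : A.PosSemidef) :
    ContinuousOn (fun μ : ℝ => (A + (μ : 𝕜) • 1)⁻¹) (Ioi 0) := by
  refine continuousOn_of_forall_continuousAt fun μ hμ => ?_
  have hdet : (A + (μ : 𝕜) • 1).det ≠ 0 := (hA.posDef_add_smul_one_s16 hμ).det_pos.ne'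
  have hinverse : ContinuousAt Ring.inverse (A + (μ : 𝕜) • 1).det := by
    simpa only [Ring.inverse_eq_inv'] using continuousAt_inv₀ hdet
  exact (continuousAt_matrix_inv _ hinverse).comp (f := fun μ : ℝ => A + (μ : 𝕜) • 1)
    (by fun_prop)

lemma tendsto_norm_inv_add_smul_one_mulVec_atTop [Fintype n] (hA : A.PosSemidef)
    (b : n → 𝕜) :
    Tendsto (fun μ : ℝ => ‖WithLp.toLp 2 ((A + (μ : 𝕜) • 1)⁻¹ *ᵥ b)‖) atTop (𝓝 0) :=
  squeeze_zero' (Eventually.of_forall fun _ => norm_nonneg _)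
    ((eventually_gt_atTop 0).mono fun _ hμ => hA.norm_inv_add_smul_one_mulVec_le hμ b)
    (tendsto_const_nhds.div_atTop tendsto_id)

end Matrix.PosSemidef

theorem beamformer_power_bisection_general {M : ℕ} (A : Matrix (Fin M) (Fin M) ℂ)
    (hApsd : A.PosSemidef) (b : Fin M → ℂ)
    (P : ℝ) (hP : 0 < P) (μ₀ : ℝ) (hμ₀ : 0 < μ₀)
    (h₀ : P < ‖((WithLp.equiv 2 (Fin M → ℂ)).symm
        ((A + (μ₀ : ℂ) • (1 : Matrix (Fin M) (Fin M) ℂ))⁻¹ *ᵥ b) :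
      EuclideanSpace ℂ (Fin M))‖ ^ 2) :
    ∃ μ : ℝ, μ₀ ≤ μ ∧
      ‖((WithLp.equiv 2 (Fin M → ℂ)).symm
          ((A + (μ : ℂ) • (1 : Matrix (Fin M) (Fin M) ℂ))⁻¹ *ᵥ b) :
        EuclideanSpace ℂ (Fin M))‖ ^ 2 = P := by
  set power : ℝ → ℝ := fun μ => ‖WithLp.toLp 2 ((A + (μ : ℂ) • 1)⁻¹ *ᵥ b)‖ ^ 2
  have hvanish : Tendsto power atTop (𝓝 0) := by
    have h := (hApsd.tendsto_norm_inv_add_smul_one_mulVec_atTop b).pow 2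
    rwa [zero_pow two_ne_zero] at h
  obtain ⟨μ₁, hμ₀₁, hμ₁⟩ :=
    ((eventually_ge_atTop μ₀).and (hvanish.eventually (gt_mem_nhds hP))).exists
  have hcont : ContinuousOn power (Icc μ₀ μ₁) := by
    have hinv := hApsd.continuousOn_inv_add_smul_one.mono
      fun μ (hμ : μ ∈ Icc μ₀ μ₁) => hμ₀.trans_le hμ.1
    exact (by fun_prop : Continuous fun N : Matrix (Fin M) (Fin M) ℂ =>
      ‖WithLp.toLp 2 (N *ᵥ b)‖ ^ 2).comp_continuousOn hinv
  obtain ⟨μ, hμ, hμP⟩ := intermediate_value_Icc' hμ₀₁ hcont ⟨hμ₁.le, h₀.le⟩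
  exact ⟨μ, hμ.1, hμP⟩

/-- Existence of a dual variable meeting the power constraint with equality: for
Hermitian PSD `A`, `b ∈ ℂ^M` and `P > 0`, if some `μ₀ > 0` has `‖(A + μ₀I)⁻¹ b‖² > P`,
then some `μ ≥ μ₀` achieves `‖(A + μI)⁻¹ b‖² = P` (Euclidean norm). -/
theorem beamformer_power_bisection {M : ℕ} (A : Matrix (Fin M) (Fin M) ℂ)
    (hA : A.IsHermitian) (hApsd : A.PosSemidef) (b : Fin M → ℂ)
    (P : ℝ) (hP : 0 < P) (μ₀ : ℝ) (hμ₀ : 0 < μ₀)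
    (h₀ : P < ‖((WithLp.equiv 2 (Fin M → ℂ)).symm
        ((A + (μ₀ : ℂ) • (1 : Matrix (Fin M) (Fin M) ℂ))⁻¹ *ᵥ b) :
      EuclideanSpace ℂ (Fin M))‖ ^ 2) :
    ∃ μ : ℝ, μ₀ ≤ μ ∧
      ‖((WithLp.equiv 2 (Fin M → ℂ)).symm
          ((A + (μ : ℂ) • (1 : Matrix (Fin M) (Fin M) ℂ))⁻¹ *ᵥ b) :
        EuclideanSpace ℂ (Fin M))‖ ^ 2 = P :=
  beamformer_power_bisection_general A hApsd b P hP μ₀ hμ₀ h₀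
end

section
/- In the network model, for every scheduling variable U with U k f ∈ {0,1}, every beamformer collection V, and every Γ : 𝓚 → 𝓕 → ℝ with Γ k f > −1 for all k, f, one has f_r(U, V, Γ) ≤ f_0(U, V), with equality if and only if Γ k f = γ_{k,f}(U,V) for every k and f. -/
open scoped BigOperators

variable {𝓑 𝓕 𝓚 : Type*}

/-- Signal power `S_{k,f}(U,V) = U k f · |⟪h k (β k) f, V k f⟫|²`. -/
noncomputable def sigPow {M : ℕ} (β : 𝓚 → 𝓑)
    (h : 𝓚 → 𝓑 → 𝓕 → EuclideanSpace ℂ (Fin M))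
    (U : 𝓚 → 𝓕 → ℝ) (V : 𝓚 → 𝓕 → EuclideanSpace ℂ (Fin M)) (k : 𝓚) (f : 𝓕) : ℝ :=
  U k f * ‖(inner ℂ (h k (β k) f) (V k f) : ℂ)‖ ^ 2

/-- Interference-plus-noise power
`I_{k,f}(U,V) = ∑_{k' ≠ k} U k' f · |⟪h k (β k') f, V k' f⟫|² + (σ k f)²`. -/
noncomputable def intPow {M : ℕ} [Fintype 𝓚] [DecidableEq 𝓚] (β : 𝓚 → 𝓑)
    (h : 𝓚 → 𝓑 → 𝓕 → EuclideanSpace ℂ (Fin M)) (σ : 𝓚 → 𝓕 → ℝ)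
    (U : 𝓚 → 𝓕 → ℝ) (V : 𝓚 → 𝓕 → EuclideanSpace ℂ (Fin M)) (k : 𝓚) (f : 𝓕) : ℝ :=
  (∑ k' ∈ Finset.univ.erase k,
      U k' f * ‖(inner ℂ (h k (β k') f) (V k' f) : ℂ)‖ ^ 2) + (σ k f) ^ 2

/-- SINR `γ_{k,f}(U,V) = S_{k,f}(U,V) / I_{k,f}(U,V)`. -/
noncomputable def sinr {M : ℕ} [Fintype 𝓚] [DecidableEq 𝓚] (β : 𝓚 → 𝓑)
    (h : 𝓚 → 𝓑 → 𝓕 → EuclideanSpace ℂ (Fin M)) (σ : 𝓚 → 𝓕 → ℝ)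
    (U : 𝓚 → 𝓕 → ℝ) (V : 𝓚 → 𝓕 → EuclideanSpace ℂ (Fin M)) (k : 𝓚) (f : 𝓕) : ℝ :=
  sigPow β h U V k f / intPow β h σ U V k f

/-- Weighted sum rate `f₀(U,V) = ∑_{k,f} w k · log(1 + γ_{k,f}(U,V))`. -/
noncomputable def f0 {M : ℕ} [Fintype 𝓚] [DecidableEq 𝓚] [Fintype 𝓕] (β : 𝓚 → 𝓑)
    (h : 𝓚 → 𝓑 → 𝓕 → EuclideanSpace ℂ (Fin M)) (w : 𝓚 → ℝ) (σ : 𝓚 → 𝓕 → ℝ)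
    (U : 𝓚 → 𝓕 → ℝ) (V : 𝓚 → 𝓕 → EuclideanSpace ℂ (Fin M)) : ℝ :=
  ∑ k, ∑ f, w k * Real.log (1 + sinr β h σ U V k f)

/-- Lagrangian-dual-transform objective `f_r(U,V,Γ)`. -/
noncomputable def fr {M : ℕ} [Fintype 𝓚] [DecidableEq 𝓚] [Fintype 𝓕] (β : 𝓚 → 𝓑)
    (h : 𝓚 → 𝓑 → 𝓕 → EuclideanSpace ℂ (Fin M)) (w : 𝓚 → ℝ) (σ : 𝓚 → 𝓕 → ℝ)
    (U : 𝓚 → 𝓕 → ℝ) (V : 𝓚 → 𝓕 → EuclideanSpace ℂ (Fin M)) (Γ : 𝓚 → 𝓕 → ℝ) : ℝ :=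
  ∑ k, ∑ f,
    (w k * Real.log (1 + Γ k f) - w k * Γ k f +
      w k * (1 + Γ k f) * sigPow β h U V k f /
        (sigPow β h U V k f + intPow β h σ U V k f))

/-- Quadratic-transform objective `f_q(U,V,Γ,Y)`. -/
noncomputable def fq {M : ℕ} [Fintype 𝓚] [DecidableEq 𝓚] [Fintype 𝓕] (β : 𝓚 → 𝓑)
    (h : 𝓚 → 𝓑 → 𝓕 → EuclideanSpace ℂ (Fin M)) (w : 𝓚 → ℝ) (σ : 𝓚 → 𝓕 → ℝ)
    (U : 𝓚 → 𝓕 → ℝ) (V : 𝓚 → 𝓕 → EuclideanSpace ℂ (Fin M)) (Γ : 𝓚 → 𝓕 → ℝ)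
    (Y : 𝓚 → 𝓕 → ℂ) : ℝ :=
  ∑ k, ∑ f,
    (w k * (Real.log (1 + Γ k f) - Γ k f) +
      2 * ((starRingEnd ℂ) (Y k f) *
        (((Real.sqrt (w k * (1 + Γ k f)) * U k f : ℝ) : ℂ) *
          (inner ℂ (V k f) (h k (β k) f) : ℂ))).re -
      ‖Y k f‖ ^ 2 * (sigPow β h U V k f + intPow β h σ U V k f))

/-! The bound is termwise. Writing `x = (1 + Γ) / (1 + γ)` with `γ = S / I` the SINR, one has
`S / (S + I) = γ / (1 + γ)`, and the gap between `log (1 + γ)` and the `(k, f)` summand of `f_r`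
is `w (x - 1 - log x)`, which is nonnegative and vanishes only at `x = 1`, i.e. at `Γ = γ`. -/

open Real Finset

theorem sum_sum_le_and_eq_iff_of_le {ι κ A : Type*} [Fintype ι] [Fintype κ] [AddCommMonoid A]
    [PartialOrder A] [IsOrderedCancelAddMonoid A] {a b : ι → κ → A} (h : ∀ i j, a i j ≤ b i j) :
    ∑ i, ∑ j, a i j ≤ ∑ i, ∑ j, b i j ∧
      (∑ i, ∑ j, a i j = ∑ i, ∑ j, b i j ↔ ∀ i j, a i j = b i j) := by
  have hrow i : ∑ j, a i j ≤ ∑ j, b i j := sum_le_sum fun j _ => h i j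
  refine ⟨sum_le_sum fun i _ => hrow i, ?_⟩
  rw [sum_eq_sum_iff_of_le fun i _ => hrow i]
  exact forall_congr' fun i => by simp [sum_eq_sum_iff_of_le fun j _ => h i j]

noncomputable def lagrangianDualTransform (γ Γ : ℝ) : ℝ :=
  log (1 + Γ) - Γ + (1 + Γ) * γ / (1 + γ)

theorem log_one_add_sub_lagrangianDualTransform {γ Γ : ℝ} (hγ : -1 < γ) (hΓ : -1 < Γ) :
    log (1 + γ) - lagrangianDualTransform γ Γ =
      (1 + Γ) / (1 + γ) - 1 - log ((1 + Γ) / (1 + γ)) := by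
  have h1γ : 1 + γ ≠ 0 := by linarith
  rw [lagrangianDualTransform, log_div (by linarith) h1γ]
  field_simp
  ring

theorem lagrangianDualTransform_le {γ Γ : ℝ} (hγ : -1 < γ) (hΓ : -1 < Γ) :
    lagrangianDualTransform γ Γ ≤ log (1 + γ) := by
  have hgap := log_one_add_sub_lagrangianDualTransform hγ hΓ
  have hlog := log_le_sub_one_of_pos (div_pos (by linarith : 0 < 1 + Γ) (by linarith : 0 < 1 + γ))
  linarith

theorem lagrangianDualTransform_eq_iff {γ Γ : ℝ} (hγ : -1 < γ) (hΓ : -1 < Γ) :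
    lagrangianDualTransform γ Γ = log (1 + γ) ↔ Γ = γ := by
  have h1γ : 0 < 1 + γ := by linarith
  refine ⟨fun heq => by_contra fun hne => ?_, fun hΓγ => ?_⟩
  · have hx : (1 + Γ) / (1 + γ) ≠ 1 := by
      rwa [ne_eq, div_eq_one_iff_eq h1γ.ne', add_right_inj]
    have hlog := log_lt_sub_one_of_pos (div_pos (by linarith) h1γ) hx
    have hgap := log_one_add_sub_lagrangianDualTransform hγ hΓ
    linarith
  · rw [lagrangianDualTransform, hΓγ, mul_div_cancel_left₀ _ h1γ.ne']
    ring

theorem mul_lagrangianDualTransform_div {w S I Γ : ℝ} (hI : I ≠ 0) :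
    w * lagrangianDualTransform (S / I) Γ =
      w * log (1 + Γ) - w * Γ + w * (1 + Γ) * S / (S + I) := by
  rw [lagrangianDualTransform, mul_div_assoc, one_add_div hI, add_comm I,
    div_div_div_cancel_right₀ hI]
  ring

section Network

variable {M : ℕ} (β : 𝓚 → 𝓑)
  (h : 𝓚 → 𝓑 → 𝓕 → EuclideanSpace ℂ (Fin M)) (σ : 𝓚 → 𝓕 → ℝ) (U : 𝓚 → 𝓕 → ℝ)
  (V : 𝓚 → 𝓕 → EuclideanSpace ℂ (Fin M))

theorem sigPow_nonneg {k : 𝓚} {f : 𝓕} (hU : 0 ≤ U k f) : 0 ≤ sigPow β h U V k f :=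
  mul_nonneg hU (sq_nonneg _)

variable [Fintype 𝓚] [DecidableEq 𝓚]

theorem intPow_pos {k : 𝓚} {f : 𝓕} (hσ : σ k f ≠ 0) (hU : ∀ k', 0 ≤ U k' f) :
    0 < intPow β h σ U V k f :=
  add_pos_of_nonneg_of_pos (sum_nonneg fun k' _ => mul_nonneg (hU k') (sq_nonneg _))
    (sq_pos_of_ne_zero hσ)

theorem neg_one_lt_sinr {k : 𝓚} {f : 𝓕} (hσ : σ k f ≠ 0) (hU : ∀ k', 0 ≤ U k' f) :
    -1 < sinr β h σ U V k f :=
  neg_one_lt_zero.trans_le <| div_nonneg (sigPow_nonneg β h U V (hU k))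
    (intPow_pos β h σ U V hσ hU).le

theorem fr_eq_sum_mul_lagrangianDualTransform [Fintype 𝓕] (w : 𝓚 → ℝ) (Γ : 𝓚 → 𝓕 → ℝ)
    (hσ : ∀ k f, σ k f ≠ 0) (hU : ∀ k f, 0 ≤ U k f) :
    fr β h w σ U V Γ =
      ∑ k, ∑ f, w k * lagrangianDualTransform (sinr β h σ U V k f) (Γ k f) := by
  refine sum_congr rfl fun k _ => sum_congr rfl fun f _ => ?_
  exact (mul_lagrangianDualTransform_div (intPow_pos β h σ U V (hσ k f) (hU · f)).ne').symm

end Network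

/-- Lagrangian dual transform bound in the network model: for binary scheduling `U`,
any beamformers `V`, and any `Γ` with `Γ k f > −1`, one has `f_r(U,V,Γ) ≤ f₀(U,V)`,
with equality iff `Γ k f = γ_{k,f}(U,V)` for all `k, f`. -/
theorem fr_le_f0 {M : ℕ} [Fintype 𝓚] [DecidableEq 𝓚] [Fintype 𝓕]
    (β : 𝓚 → 𝓑) (h : 𝓚 → 𝓑 → 𝓕 → EuclideanSpace ℂ (Fin M))
    (w : 𝓚 → ℝ) (σ : 𝓚 → 𝓕 → ℝ) (hw : ∀ k, 0 < w k) (hσ : ∀ k f, 0 < σ k f)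
    (U : 𝓚 → 𝓕 → ℝ) (hU : ∀ k f, U k f = 0 ∨ U k f = 1)
    (V : 𝓚 → 𝓕 → EuclideanSpace ℂ (Fin M))
    (Γ : 𝓚 → 𝓕 → ℝ) (hΓ : ∀ k f, -1 < Γ k f) :
    fr β h w σ U V Γ ≤ f0 β h w σ U V ∧
      (fr β h w σ U V Γ = f0 β h w σ U V ↔ ∀ k f, Γ k f = sinr β h σ U V k f) := by
  have hσ₀ k f : σ k f ≠ 0 := (hσ k f).ne'
  have hU₀ k f : 0 ≤ U k f := by rcases hU k f with h | h <;> simp [h]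
  have hsinr k f := neg_one_lt_sinr β h σ U V (hσ₀ k f) (hU₀ · f)
  rw [fr_eq_sum_mul_lagrangianDualTransform β h σ U V w Γ hσ₀ hU₀]
  obtain ⟨hle, heq⟩ := sum_sum_le_and_eq_iff_of_le fun k f =>
    mul_le_mul_of_nonneg_left (lagrangianDualTransform_le (hsinr k f) (hΓ k f)) (hw k).le
  refine ⟨hle, heq.trans (forall₂_congr fun k f => ?_)⟩
  rw [mul_right_inj' (hw k).ne', lagrangianDualTransform_eq_iff (hsinr k f) (hΓ k f)]
end
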